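/- For all n ≥ 0 and r ≥ 1: H_n(x|λ) = ∑_{l=0}^{n} [ C(n,l) ∑_{m=0}^{min(r-1,l)} C(r-1,m)/(1-λ)^m · m! S(l,m) ] H_{n-l}^{(r)}(x|λ), where S(l,m) denotes the Stirling numbers of the second kind. -/

import Mathlib

/-!
Write `u = eᵗ - λ` and `F_r` for the generating function of `H⁽ʳ⁾(x|λ)`. The defining
identities `F_r uʳ = (1-λ)ʳ e^{xt}` for orders `1` and `r` give `(1-λ)^{r-1} F₁ = u^{r-1} F_r`
after cancelling `uʳ`, which is legitimate because `u` has constant term `1 - λ ≠ 0`. Expanding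
`u^{r-1} = ((eᵗ - 1) + (1 - λ))^{r-1}` binomially and using `(eᵗ - 1)ᵐ = ∑ₗ m! S(l,m) tˡ/l!`
writes `F₁` as a product of two exponential generating functions, so comparing coefficients of
`tⁿ/n!` gives a binomial convolution. The inner sum may stop at `min(r-1, l)` since
`S(l,m) = 0` for `m > l`.
-/

open Finset PowerSeries

/-- `m! S(l,m) = ∑_{k₁+⋯+k_m = l, k_j ≥ 1} (l choose k₁,…,k_m)`, i.e. `m!` times the
Stirling number of the second kind. -/
def mFactStirling (l m : ℕ) : ℕ :=
  ∑ k ∈ (Finset.Nat.antidiagonalTuple m l).filter (fun k => ∀ j, 1 ≤ k j),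
    Nat.multinomial Finset.univ k

open Nat

lemma coeff_pow_eq_sum_antidiagonalTuple {R : Type*} [CommSemiring R] (f : R⟦X⟧) (m l : ℕ) :
    coeff l (f ^ m) = ∑ k ∈ Finset.Nat.antidiagonalTuple m l, ∏ j, coeff (k j) f := by
  rw [← Fin.prod_const, coeff_prod]
  exact sum_equiv Finsupp.equivFunOnFinite (by simp [Finset.Nat.mem_antidiagonalTuple])
    fun _ _ => rfl

lemma mFactStirling_eq_zero_of_lt {l m : ℕ} (h : l < m) : mFactStirling l m = 0 := by
  refine sum_eq_zero fun k hk => absurd h (not_lt.mpr ?_)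
  simp only [mem_filter, Finset.Nat.mem_antidiagonalTuple] at hk
  simpa [← hk.1] using card_nsmul_le_sum univ k 1 fun j _ => hk.2 j

lemma sum_range_min_succ_mul_mFactStirling {R : Type*} [Semiring R] (f : ℕ → R) (s l : ℕ) :
    ∑ m ∈ range (min s l + 1), f m * mFactStirling l m =
      ∑ m ∈ range (s + 1), f m * mFactStirling l m := by
  refine sum_subset (range_subset_range.mpr (by omega)) fun m hm hml => ?_
  simp only [mem_range] at hm hml
  simp [mFactStirling_eq_zero_of_lt (show l < m by omega)]

section ExponentialGeneratingFunction

variable {K : Type*} [Field K]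

def egf (a : ℕ → K) : K⟦X⟧ := mk fun n => a n * (n ! : K)⁻¹

@[simp]
lemma coeff_egf (a : ℕ → K) (n : ℕ) : coeff n (egf a) = a n * (n ! : K)⁻¹ :=
  coeff_mk _ _

lemma sum_C_mul_egf {ι : Type*} (s : Finset ι) (c : ι → K) (a : ι → ℕ → K) :
    ∑ i ∈ s, C (c i) * egf (a i) = egf fun n => ∑ i ∈ s, c i * a i n := by
  ext n
  simp [map_sum, sum_mul, mul_assoc]

variable [CharZero K]

lemma egf_injective : Function.Injective (egf (K := K)) := fun a b h => funext fun n => by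
  simpa [Nat.factorial_ne_zero] using congrArg (coeff n) h

lemma egf_mul (a b : ℕ → K) :
    egf a * egf b = egf fun n => ∑ l ∈ range (n + 1), n.choose l * a l * b (n - l) := by
  ext n
  rw [coeff_mul, Finset.Nat.sum_antidiagonal_eq_sum_range_succ_mk, coeff_egf, sum_mul]
  refine sum_congr rfl fun l hl => ?_
  rw [Nat.cast_choose K (Nat.lt_succ_iff.mp (mem_range.mp hl)), coeff_egf, coeff_egf]
  have : (n ! : K) ≠ 0 := Nat.cast_ne_zero.mpr n.factorial_ne_zero
  field_simp

lemma coeff_exp_sub_one (j : ℕ) :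
    coeff j (exp K - 1) = if j = 0 then 0 else (j ! : K)⁻¹ := by
  rcases eq_or_ne j 0 with rfl | hj <;> simp [coeff_one, *]

lemma prod_coeff_exp_sub_one {m l : ℕ} {k : Fin m → ℕ} (hk : ∑ j, k j = l) :
    ∏ j, coeff (k j) (exp K - 1) =
      if ∀ j, 1 ≤ k j then (Nat.multinomial univ k : K) * (l ! : K)⁻¹ else 0 := by
  split_ifs with hpos
  · have hspec : (∏ j, ((k j)! : K)) * Nat.multinomial univ k = l ! := by
      exact_mod_cast hk ▸ Nat.multinomial_spec univ k
    have hprod : (∏ j, ((k j)! : K)) ≠ 0 := prod_ne_zero_iff.mpr fun j _ =>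
      Nat.cast_ne_zero.mpr (k j).factorial_ne_zero
    have hmult : (Nat.multinomial univ k : K) ≠ 0 := by
      exact_mod_cast (Nat.multinomial_pos univ k).ne'
    simp only [coeff_exp_sub_one, fun j => Nat.one_le_iff_ne_zero.mp (hpos j), if_false,
      prod_inv_distrib]
    rw [← hspec]
    field_simp
  · push Not at hpos
    obtain ⟨j, hj⟩ := hpos
    exact prod_eq_zero (mem_univ j) (by simp [coeff_exp_sub_one, Nat.lt_one_iff.mp hj])

lemma exp_sub_one_pow_eq_egf (m : ℕ) :
    (exp K - 1) ^ m = egf fun l => (mFactStirling l m : K) := by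
  ext l
  rw [coeff_pow_eq_sum_antidiagonalTuple, coeff_egf, mFactStirling, Nat.cast_sum, sum_filter,
    sum_mul]
  refine sum_congr rfl fun k hk => ?_
  rw [prod_coeff_exp_sub_one (Finset.Nat.mem_antidiagonalTuple.mp hk)]
  split_ifs <;> simp

lemma exp_sub_C_pow_eq_C_mul_egf {lam : K} (hlam : lam ≠ 1) (s : ℕ) :
    (exp K - C lam) ^ s = C ((1 - lam) ^ s) *
      egf fun l => ∑ m ∈ range (s + 1), (s.choose m : K) / (1 - lam) ^ m * mFactStirling l m := by
  have hlam' : (1 : K) - lam ≠ 0 := sub_ne_zero.mpr hlam.symm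
  have hbinom : (exp K - C lam) ^ s = C ((1 - lam) ^ s) *
      ∑ m ∈ range (s + 1), C ((s.choose m : K) / (1 - lam) ^ m) * (exp K - 1) ^ m := by
    rw [show exp K - C lam = (exp K - 1) + C (1 - lam) by simp only [map_sub, map_one]; ring,
      add_pow, mul_sum]
    refine sum_congr rfl fun m hm => ?_
    have hcoeff : (1 - lam) ^ s * ((s.choose m : K) / (1 - lam) ^ m) =
        (1 - lam) ^ (s - m) * s.choose m := by
      rw [pow_sub₀ _ hlam' (Nat.lt_succ_iff.mp (mem_range.mp hm))]
      field_simp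
    rw [← mul_assoc, ← map_mul, hcoeff, map_mul, map_pow, map_natCast]
    ring
  simpa only [exp_sub_one_pow_eq_egf, sum_C_mul_egf] using hbinom

end ExponentialGeneratingFunction

/-- For `r ≥ 1`:
`Hₙ(x|λ) = ∑_{l=0}^{n} [C(n,l) ∑_{m=0}^{min(r-1,l)} C(r-1,m)/(1-λ)ᵐ · m!S(l,m)] H_{n-l}⁽ʳ⁾(x|λ)`. -/
theorem frobenius_euler_in_order_r (lam : ℂ) (hlam : lam ≠ 1)
    (H : ℕ → ℕ → ℂ → ℂ)
    (hH : ∀ (r : ℕ) (x : ℂ),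
      (PowerSeries.mk fun n => H r n x * ((n.factorial : ℂ))⁻¹) *
        (PowerSeries.exp ℂ - PowerSeries.C lam) ^ r =
      PowerSeries.C ((1 - lam) ^ r) *
        PowerSeries.mk fun n => x ^ n * ((n.factorial : ℂ))⁻¹)
    (n r : ℕ) (hr : 1 ≤ r) (x : ℂ) :
    H 1 n x = ∑ l ∈ range (n + 1),
      ((n.choose l : ℂ) * ∑ m ∈ range (min (r - 1) l + 1),
        ((r - 1).choose m : ℂ) / (1 - lam) ^ m * (mFactStirling l m : ℂ)) *
        H r (n - l) x := by
  obtain ⟨s, rfl⟩ : ∃ s, r = s + 1 := ⟨r - 1, by omega⟩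
  have hlam' : (1 : ℂ) - lam ≠ 0 := sub_ne_zero.mpr hlam.symm
  set u := exp ℂ - C lam
  have hu : u ≠ 0 := fun h => hlam' (by simpa [u] using congrArg constantCoeff h)
  have hH1 : egf (H 1 · x) * u ^ 1 = C ((1 - lam) ^ 1) * egf (x ^ ·) := hH 1 x
  have hHr : egf (H (s + 1) · x) * u ^ (s + 1) = C ((1 - lam) ^ (s + 1)) * egf (x ^ ·) :=
    hH (s + 1) x
  have hcancel : C ((1 - lam) ^ s) * egf (H 1 · x) = u ^ s * egf (H (s + 1) · x) := by
    refine mul_right_cancel₀ (pow_ne_zero (s + 1) hu) ?_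
    rw [pow_one, pow_one] at hH1
    rw [map_pow] at hHr ⊢
    linear_combination C (1 - lam) ^ s * u ^ s * hH1 - u ^ s * hHr
  rw [exp_sub_C_pow_eq_C_mul_egf hlam, mul_assoc, egf_mul] at hcancel
  have hC : C ((1 - lam) ^ s) ≠ 0 := (map_ne_zero_iff _ C_injective).mpr (pow_ne_zero s hlam')
  rw [Nat.add_sub_cancel, congrFun (egf_injective (mul_left_cancel₀ hC hcancel)) n]
  refine sum_congr rfl fun l _ => ?_
  rw [sum_range_min_succ_mul_mFactStirling]
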